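/- Let p̂ satisfy the two-sided bound c/(β^{r/2}‖θ‖^r) ≤ p̂(θ) ≤ C/(β^{r/2}‖θ‖^r) with d > r ≥ 0. Then S(Δ) remains bounded as Δ → 0⁺: there exists a constant M (independent of Δ, depending only on c, C, β, d, r) with S(Δ) ≤ M for all Δ ∈ (0, π). -/

import Mathlib

/-!
Since the sup norm is dominated by the Euclidean one, the upper bound on `p` gives
`p θ ≤ |C / β ^ (r / 2)| * ‖θ‖∞ ^ (-r)` on the cube `[-π, π]^d` minus the origin.
As `r < d`, the function `‖θ‖ ^ (-r)` is locally integrable on `ℝ^d`, so its integral over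
the cube bounds the integral of `p` over every annulus `{Δ ≤ |θ i| ≤ π}`.
-/

open MeasureTheory Metric

/-- If `f` is not integrable, then `∫ f = 0 ≤ ∫ g`. -/
theorem integral_le_integral_of_ae_le_of_nonneg {α : Type*} [MeasurableSpace α] {μ : Measure α}
    {f g : α → ℝ} (hg : Integrable g μ) (hg0 : 0 ≤ᵐ[μ] g) (hfg : f ≤ᵐ[μ] g) :
    ∫ x, f x ∂μ ≤ ∫ x, g x ∂μ := by
  by_cases hf : Integrable f μ
  · exact integral_mono_ae hf hg hfg
  · rw [integral_undef hf]
    exact integral_nonneg_of_ae hg0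

theorem norm_le_sqrt_sum_sq {ι : Type*} [Fintype ι] (θ : ι → ℝ) :
    ‖θ‖ ≤ √(∑ i, θ i ^ 2) :=
  (pi_norm_le_iff_of_nonneg (Real.sqrt_nonneg _)).2 fun i =>
    Real.abs_le_sqrt (Finset.single_le_sum (fun j _ => sq_nonneg (θ j)) (Finset.mem_univ i))

theorem div_mul_sqrt_sum_sq_pow_le {ι : Type*} [Fintype ι] {θ : ι → ℝ} (hθ : θ ≠ 0)
    (C b : ℝ) (r : ℕ) :
    C / (b * √(∑ i, θ i ^ 2) ^ r) ≤ |C / b| * ‖θ‖ ^ (-(r : ℝ)) := by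
  have hθr : 0 < ‖θ‖ ^ r := pow_pos (norm_pos_iff.2 hθ) r
  calc C / (b * √(∑ i, θ i ^ 2) ^ r) = C / b * (√(∑ i, θ i ^ 2) ^ r)⁻¹ := by
        rw [div_mul_eq_div_div, div_eq_mul_inv]
    _ ≤ |C / b| * (‖θ‖ ^ r)⁻¹ :=
        mul_le_mul (le_abs_self _)
          (inv_anti₀ hθr (pow_le_pow_left₀ (norm_nonneg θ) (norm_le_sqrt_sum_sq θ) r))
          (by positivity) (abs_nonneg _)
    _ = |C / b| * ‖θ‖ ^ (-(r : ℝ)) := by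
        rw [Real.rpow_neg (norm_nonneg θ), Real.rpow_natCast]

theorem integrableOn_closedBall_const_mul_norm_rpow_neg {E : Type*} [NormedAddCommGroup E]
    [NormedSpace ℝ E] [FiniteDimensional ℝ E] [MeasurableSpace E] [BorelSpace E]
    {μ : Measure E} [μ.IsAddHaarMeasure] (hE : 1 ≤ Module.finrank ℝ E) {α : ℝ}
    (hα : α < Module.finrank ℝ E) (K R : ℝ) :
    IntegrableOn (fun x => K * ‖x‖ ^ (-α)) (closedBall 0 R) μ := by
  have hdecay : ∀ᵐ x ∂μ, ‖K * ‖x‖ ^ (-α)‖ ≤ |K| * ‖x‖ ^ (-α) :=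
    Filter.Eventually.of_forall fun x => by
      rw [norm_mul, Real.norm_eq_abs, Real.norm_of_nonneg (Real.rpow_nonneg (norm_nonneg x) _)]
  have hmeas : Measurable fun x : E => K * ‖x‖ ^ (-α) :=
    measurable_const.mul (measurable_norm.pow_const _)
  exact (locallyIntegrable_of_norm_le_rpow hE hα hdecay hmeas.aestronglyMeasurable)
    |>.integrableOn_isCompact (isCompact_closedBall 0 R)

theorem stmt_9_general (d r : ℕ) (hrd : r < d) (c C β : ℝ)
    (p : (Fin d → ℝ) → ℝ)
    (hbound : ∀ θ : Fin d → ℝ, θ ≠ 0 → (∀ i, |θ i| ≤ Real.pi) →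
      c / (β ^ ((r : ℝ) / 2) * Real.sqrt (∑ i, (θ i) ^ 2) ^ r) ≤ p θ ∧
      p θ ≤ C / (β ^ ((r : ℝ) / 2) * Real.sqrt (∑ i, (θ i) ^ 2) ^ r)) :
    ∃ M : ℝ, ∀ Δ : ℝ, 0 < Δ → Δ < Real.pi →
      (∫ θ in {θ : Fin d → ℝ | ∀ i, Δ ≤ |θ i| ∧ |θ i| ≤ Real.pi}, p θ) ≤ M := by
  set G : (Fin d → ℝ) → ℝ := fun θ => |C / β ^ ((r : ℝ) / 2)| * ‖θ‖ ^ (-(r : ℝ))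
  have hG : IntegrableOn G (closedBall 0 Real.pi) :=
    integrableOn_closedBall_const_mul_norm_rpow_neg
      (by simpa using Nat.one_le_of_lt hrd) (by simpa using hrd) _ _
  have hG0 : ∀ θ, 0 ≤ G θ := fun θ => by positivity
  refine ⟨∫ θ in closedBall 0 Real.pi, G θ, fun Δ hΔ _ => ?_⟩
  set S := {θ : Fin d → ℝ | ∀ i, Δ ≤ |θ i| ∧ |θ i| ≤ Real.pi}
  have hS : MeasurableSet S := by measurability
  have hSball : S ⊆ closedBall 0 Real.pi := fun θ hθ =>
    mem_closedBall_zero_iff.2 ((pi_norm_le_iff_of_nonneg Real.pi_pos.le).2 fun i => (hθ i).2)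
  have hpG : ∀ θ ∈ S, p θ ≤ G θ := fun θ hθ => by
    have hθ0 : θ ≠ 0 := fun h => by
      have := hΔ.trans_le (hθ ⟨0, Nat.zero_lt_of_lt hrd⟩).1
      simp [h] at this
    exact (hbound θ hθ0 fun i => (hθ i).2).2.trans (div_mul_sqrt_sum_sq_pow_le hθ0 _ _ _)
  calc (∫ θ in S, p θ) ≤ ∫ θ in S, G θ :=
        integral_le_integral_of_ae_le_of_nonneg (hG.mono_set hSball)
          (Filter.Eventually.of_forall hG0) (ae_restrict_of_forall_mem hS hpG)
    _ ≤ ∫ θ in closedBall 0 Real.pi, G θ :=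
        setIntegral_mono_set hG (Filter.Eventually.of_forall hG0) hSball.eventuallyLE

/-- In the fully coherent case `d > r`, the integral `S(Δ)` stays bounded as `Δ → 0⁺`. -/
theorem stmt_9 (d r : ℕ) (hd : 1 ≤ d) (hrd : r < d) (c C β : ℝ)
    (hc : 0 < c) (hcC : c ≤ C) (hβ : 0 < β)
    (p : (Fin d → ℝ) → ℝ) (hmeas : Measurable p)
    (hbound : ∀ θ : Fin d → ℝ, θ ≠ 0 → (∀ i, |θ i| ≤ Real.pi) →
      c / (β ^ ((r : ℝ) / 2) * Real.sqrt (∑ i, (θ i) ^ 2) ^ r) ≤ p θ ∧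
      p θ ≤ C / (β ^ ((r : ℝ) / 2) * Real.sqrt (∑ i, (θ i) ^ 2) ^ r)) :
    ∃ M : ℝ, ∀ Δ : ℝ, 0 < Δ → Δ < Real.pi →
      (∫ θ in {θ : Fin d → ℝ | ∀ i, Δ ≤ |θ i| ∧ |θ i| ≤ Real.pi}, p θ) ≤ M :=
  stmt_9_general d r hrd c C β p hbound
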